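/- Let m ≥ 2 and D, E, F ⊆ [m] with 1 ≤ |D|, |E|, |F| ≤ m−1. Then for every a = (p, q+ur) with p, q, r ∈ Z_2^m, the Lee weight wt_L(c_a) of the codeword c_a of C_L is divisible by 4. -/
import Mathlib


open Finset

/-- The ring Z_2[u] with u² = 0: dual numbers over Z_2. -/
abbrev R2 : Type := DualNumber (ZMod 2)

/-- The support of a vector in Z_2^m, as a finset of coordinates. -/
def suppF {m : ℕ} (w : Fin m → ZMod 2) : Finset (Fin m) :=
  Finset.univ.filter fun i => w i ≠ 0

/-- Inner product ⟨x,y⟩ = Σ_i x_i y_i in Z_2. -/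
def ip {m : ℕ} (x y : Fin m → ZMod 2) : ZMod 2 := ∑ i, x i * y i

/-- The defining set L = Δ_D^c × Δ_E^c × Δ_F^c, parametrized by triples (t₁,t₂,t₃). -/
def Lset (m : ℕ) (D E F : Finset (Fin m)) :
    Finset ((Fin m → ZMod 2) × (Fin m → ZMod 2) × (Fin m → ZMod 2)) :=
  Finset.univ.filter fun t => ¬ suppF t.1 ⊆ D ∧ ¬ suppF t.2.1 ⊆ E ∧ ¬ suppF t.2.2 ⊆ F

/-- The codeword c_a = (a·l)_{l∈L} for a = (p, q+ur), where
a·l = ⟨q,t₂⟩ + u(⟨p,t₁⟩ + ⟨q,t₃⟩ + ⟨r,t₂⟩). -/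
def cword {m : ℕ} (D E F : Finset (Fin m)) (p q r : Fin m → ZMod 2) :
    ↥(Lset m D E F) → R2 := fun l =>
  TrivSqZeroExt.inl (ip q l.val.2.1) +
    TrivSqZeroExt.inr (ip p l.val.1 + ip q l.val.2.2 + ip r l.val.2.1)

/-- Lee weight of a single element q + ur of Z_2[u]: wt_H(r) + wt_H(q+r). -/
def leeWtOne (x : R2) : ℕ :=
  (if TrivSqZeroExt.snd x ≠ 0 then 1 else 0) +
    (if TrivSqZeroExt.fst x + TrivSqZeroExt.snd x ≠ 0 then 1 else 0)

/-- Lee weight of a vector over Z_2[u]: sum of coordinate Lee weights. -/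
def leeWt {ι : Type} [Fintype ι] (c : ι → R2) : ℕ := ∑ i, leeWtOne (c i)

/-- The Gray map: coordinatewise q + ur ↦ (r, q + r). -/
def gray {ι : Type} (c : ι → R2) : ι ⊕ ι → ZMod 2 :=
  Sum.elim (fun i => TrivSqZeroExt.snd (c i))
    (fun i => TrivSqZeroExt.fst (c i) + TrivSqZeroExt.snd (c i))

/-- The code C_L as a set of words over Z_2[u] indexed by L. -/
def CL (m : ℕ) (D E F : Finset (Fin m)) : Set (↥(Lset m D E F) → R2) :=
  { c | ∃ p q r : Fin m → ZMod 2, c = cword D E F p q r }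

def chi (z : ZMod 2) : ℤ := if z = 0 then 1 else -1

lemma chi_add (a b : ZMod 2) : chi (a + b) = chi a * chi b := by revert a b; decide

lemma chi_sum {ι : Type*} (s : Finset ι) (f : ι → ZMod 2) :
    chi (∑ i ∈ s, f i) = ∏ i ∈ s, chi (f i) := by
  induction s using Finset.cons_induction with
  | empty => simp [chi]
  | cons a s ha ih => rw [Finset.sum_cons, Finset.prod_cons, chi_add, ih]

lemma deltaSum {m : ℕ} (S : Finset (Fin m)) (x : Fin m → ZMod 2) :
    ∑ t ∈ univ.filter (fun t => suppF t ⊆ S), chi (ip x t)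
      = if ∀ i ∈ S, x i = 0 then 2 ^ S.card else 0 := by
  have hset : univ.filter (fun t : Fin m → ZMod 2 => suppF t ⊆ S)
      = Fintype.piFinset (fun i => if i ∈ S then (univ : Finset (ZMod 2)) else {0}) := by
    ext t
    simp only [mem_filter, mem_univ, true_and, Fintype.mem_piFinset, suppF,
      Finset.subset_iff]
    constructor
    · intro h i
      by_cases hi : i ∈ S
      · simp [hi]
      · simp only [hi, if_false, Finset.mem_singleton]
        by_contra hne
        exact hi (h hne)
    · intro h i hi
      have hi' : t i ≠ 0 := hi
      have := h i
      by_contra hiS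
      rw [if_neg hiS, Finset.mem_singleton] at this
      exact hi' this
  have hchi : ∀ t : Fin m → ZMod 2, chi (ip x t) = ∏ i, chi (x i * t i) := by
    intro t; rw [ip, chi_sum]
  rw [hset]
  rw [Finset.sum_congr rfl (fun t _ => hchi t),
    ← Finset.prod_univ_sum (fun i => if i ∈ S then (univ : Finset (ZMod 2)) else {0})
      (fun i c => chi (x i * c))]
  have hcoord : ∀ i, (∑ c ∈ (if i ∈ S then (univ : Finset (ZMod 2)) else {0}), chi (x i * c))
      = if i ∈ S then (if x i = 0 then 2 else 0) else 1 := by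
    intro i
    by_cases hi : i ∈ S
    · simp only [hi, if_true]
      have : ∀ a : ZMod 2, ∑ c : ZMod 2, chi (a * c) = if a = 0 then 2 else 0 := by decide
      exact this (x i)
    · simp [hi, chi]
  rw [Finset.prod_congr rfl (fun i _ => hcoord i)]
  by_cases hall : ∀ i ∈ S, x i = 0
  · rw [if_pos hall]
    have : ∀ i ∈ (univ : Finset (Fin m)),
        (if i ∈ S then (if x i = 0 then (2:ℤ) else 0) else 1) = if i ∈ S then 2 else 1 := by
      intro i _
      by_cases hi : i ∈ S <;> simp [hi]
      exact hall i hi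
    rw [Finset.prod_congr rfl this, Finset.prod_ite_mem, univ_inter, Finset.prod_const]
  · rw [if_neg hall]
    push_neg at hall
    obtain ⟨i, hi, hxi⟩ := hall
    exact Finset.prod_eq_zero (mem_univ i) (by simp [hi, hxi])

lemma fullSum {m : ℕ} (x : Fin m → ZMod 2) :
    ∑ t : Fin m → ZMod 2, chi (ip x t) = if ∀ i, x i = 0 then 2 ^ m else 0 := by
  have h := deltaSum (univ : Finset (Fin m)) x
  simp only [Finset.subset_univ, Finset.filter_true_of_mem (fun _ _ => Finset.subset_univ _),
    Finset.mem_univ, forall_true_left, Finset.card_univ, Fintype.card_fin] at h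
  simpa using h

lemma compSum_even {m : ℕ} (hm : 1 ≤ m) (S : Finset (Fin m)) (hS : 1 ≤ S.card)
    (x : Fin m → ZMod 2) :
    (2:ℤ) ∣ ∑ t ∈ univ.filter (fun t => ¬ suppF t ⊆ S), chi (ip x t) := by
  have hsplit := Finset.sum_filter_add_sum_filter_not univ
    (fun t : Fin m → ZMod 2 => suppF t ⊆ S) (fun t => chi (ip x t))
  have hval : ∑ t ∈ univ.filter (fun t => ¬ suppF t ⊆ S), chi (ip x t)
      = (if ∀ i, x i = 0 then 2 ^ m else 0) - (if ∀ i ∈ S, x i = 0 then 2 ^ S.card else 0) := by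
    rw [← fullSum x, ← deltaSum S x]
    have : ∑ t : Fin m → ZMod 2, chi (ip x t) = ∑ t ∈ univ, chi (ip x t) := rfl
    omega
  rw [hval]
  have h1 : (2:ℤ) ∣ (if ∀ i, x i = 0 then 2 ^ m else 0) := by
    split_ifs
    · exact dvd_pow_self 2 (by omega)
    · exact dvd_zero 2
  have h2 : (2:ℤ) ∣ (if ∀ i ∈ S, x i = 0 then 2 ^ S.card else 0) := by
    split_ifs
    · exact dvd_pow_self 2 (by omega)
    · exact dvd_zero 2
  exact dvd_sub h1 h2

lemma compCard_even {m : ℕ} (hm : 1 ≤ m) (S : Finset (Fin m)) (hS : 1 ≤ S.card) :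
    (2:ℤ) ∣ ((univ.filter (fun t : Fin m → ZMod 2 => ¬ suppF t ⊆ S)).card : ℤ) := by
  have : ((univ.filter (fun t : Fin m → ZMod 2 => ¬ suppF t ⊆ S)).card : ℤ)
      = ∑ t ∈ univ.filter (fun t : Fin m → ZMod 2 => ¬ suppF t ⊆ S), chi (ip 0 t) := by
    rw [Finset.card_eq_sum_ones]
    push_cast
    refine Finset.sum_congr rfl fun t _ => ?_
    simp [ip, chi]
  rw [this]
  exact compSum_even hm S hS 0

lemma tripleFactor {α : Type*} (A B C : Finset α) (f g h : α → ℤ) :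
    ∑ l ∈ A ×ˢ (B ×ˢ C), f l.1 * g l.2.1 * h l.2.2
      = (∑ a ∈ A, f a) * (∑ b ∈ B, g b) * (∑ c ∈ C, h c) := by
  have h2 : ∑ y ∈ B ×ˢ C, g y.1 * h y.2 = (∑ b ∈ B, g b) * (∑ c ∈ C, h c) :=
    by rw [Finset.sum_mul_sum B C g h, Finset.sum_product]
  rw [Finset.sum_product]
  have : ∀ a : α, ∑ y ∈ B ×ˢ C, f (a, y).1 * g (a, y).2.1 * h (a, y).2.2
      = f a * ((∑ b ∈ B, g b) * (∑ c ∈ C, h c)) := by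
    intro a
    rw [← h2, Finset.mul_sum]
    exact Finset.sum_congr rfl fun y _ => by ring
  rw [Finset.sum_congr rfl fun a _ => this a, ← Finset.sum_mul, mul_assoc]

lemma point (a b : ZMod 2) :
    (2:ℤ) * (leeWtOne (TrivSqZeroExt.inl a + TrivSqZeroExt.inr b) : ℤ)
      = 2 - chi b - chi (a + b) := by
  revert a b; decide

lemma ip_add_left {m : ℕ} (x y t : Fin m → ZMod 2) :
    ip (x + y) t = ip x t + ip y t := by
  simp [ip, add_mul, Finset.sum_add_distrib]

lemma Lset_eq (m : ℕ) (D E F : Finset (Fin m)) :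
    Lset m D E F = (univ.filter fun t : Fin m → ZMod 2 => ¬ suppF t ⊆ D) ×ˢ
      ((univ.filter fun t : Fin m → ZMod 2 => ¬ suppF t ⊆ E) ×ˢ
       (univ.filter fun t : Fin m → ZMod 2 => ¬ suppF t ⊆ F)) := by
  ext t
  simp [Lset, Finset.mem_product, and_assoc]

theorem stmt13' (m : ℕ) (hm : 2 ≤ m) (D E F : Finset (Fin m))
    (hD1 : 1 ≤ D.card) (hE1 : 1 ≤ E.card) (hF1 : 1 ≤ F.card) :
    ∀ p q r : Fin m → ZMod 2, 4 ∣ leeWt (cword D E F p q r) := by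
  intro p q r
  have hm1 : 1 ≤ m := by omega
  set A := (univ.filter fun t : Fin m → ZMod 2 => ¬ suppF t ⊆ D) with hA
  set B := (univ.filter fun t : Fin m → ZMod 2 => ¬ suppF t ⊆ E) with hB
  set C := (univ.filter fun t : Fin m → ZMod 2 => ¬ suppF t ⊆ F) with hC
  -- W as an integer sum over Lset
  have hW : (leeWt (cword D E F p q r) : ℤ) = ∑ l ∈ Lset m D E F,
      (leeWtOne (TrivSqZeroExt.inl (ip q l.2.1) +
        TrivSqZeroExt.inr (ip p l.1 + ip q l.2.2 + ip r l.2.1)) : ℤ) := by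
    rw [leeWt, Nat.cast_sum]
    exact Finset.sum_coe_sort (Lset m D E F)
      (fun l => ((leeWtOne (TrivSqZeroExt.inl (ip q l.2.1) +
        TrivSqZeroExt.inr (ip p l.1 + ip q l.2.2 + ip r l.2.1)) : ℕ) : ℤ))
  have h2W : 2 * (leeWt (cword D E F p q r) : ℤ)
      = 2 * ((Lset m D E F).card : ℤ)
        - (∑ l ∈ Lset m D E F, chi (ip p l.1 + ip q l.2.2 + ip r l.2.1))
        - (∑ l ∈ Lset m D E F, chi (ip q l.2.1 + (ip p l.1 + ip q l.2.2 + ip r l.2.1))) := by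
    rw [hW, Finset.mul_sum]
    rw [Finset.sum_congr rfl fun l _ => point (ip q l.2.1) (ip p l.1 + ip q l.2.2 + ip r l.2.1)]
    rw [Finset.sum_sub_distrib, Finset.sum_sub_distrib, Finset.sum_const]
    push_cast
    ring
  -- the two character sums are divisible by 8
  have hfac : ∀ x y z : Fin m → ZMod 2,
      ∑ l ∈ Lset m D E F, chi (ip x l.1 + ip y l.2.1 + ip z l.2.2)
        = (∑ a ∈ A, chi (ip x a)) * (∑ b ∈ B, chi (ip y b)) * (∑ c ∈ C, chi (ip z c)) := by
    intro x y z
    rw [Lset_eq, ← hA, ← hB, ← hC, ← tripleFactor A B C]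
    refine Finset.sum_congr rfl fun l _ => ?_
    rw [chi_add, chi_add]
  have hdvd8 : ∀ x y z : Fin m → ZMod 2,
      (8:ℤ) ∣ ∑ l ∈ Lset m D E F, chi (ip x l.1 + ip y l.2.1 + ip z l.2.2) := by
    intro x y z
    rw [hfac]
    have h1 := compSum_even hm1 D hD1 x
    have h2 := compSum_even hm1 E hE1 y
    have h3 := compSum_even hm1 F hF1 z
    have : (8:ℤ) = 2 * 2 * 2 := by norm_num
    rw [this]
    exact mul_dvd_mul (mul_dvd_mul h1 h2) h3
  have hS1 : (8:ℤ) ∣ ∑ l ∈ Lset m D E F, chi (ip p l.1 + ip q l.2.2 + ip r l.2.1) := by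
    have := hdvd8 p r q
    convert this using 2 with l
    ring_nf
  have hS2 : (8:ℤ) ∣ ∑ l ∈ Lset m D E F,
      chi (ip q l.2.1 + (ip p l.1 + ip q l.2.2 + ip r l.2.1)) := by
    have := hdvd8 p (q + r) q
    convert this using 2 with l
    rw [ip_add_left]
    ring_nf
  have hN : (8:ℤ) ∣ ((Lset m D E F).card : ℤ) := by
    rw [Lset_eq, ← hA, ← hB, ← hC, Finset.card_product, Finset.card_product]
    push_cast
    have h1 := compCard_even hm1 D hD1
    have h2 := compCard_even hm1 E hE1
    have h3 := compCard_even hm1 F hF1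
    have : (8:ℤ) = 2 * (2 * 2) := by norm_num
    rw [this]
    exact mul_dvd_mul h1 (mul_dvd_mul h2 h3)
  have h8 : (8:ℤ) ∣ 2 * (leeWt (cword D E F p q r) : ℤ) := by
    rw [h2W]
    have h2N : (8:ℤ) ∣ 2 * ((Lset m D E F).card : ℤ) := Dvd.dvd.mul_left hN 2
    exact dvd_sub (dvd_sub h2N hS1) hS2
  have h4 : (4:ℤ) ∣ (leeWt (cword D E F p q r) : ℤ) := by
    obtain ⟨k, hk⟩ := h8
    exact ⟨k, by omega⟩
  exact_mod_cast h4

/-- for 1 ≤ |D|, |E|, |F| ≤ m−1, every codeword of C_L has Lee weight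
divisible by 4. -/
theorem stmt13 (m : ℕ) (hm : 2 ≤ m) (D E F : Finset (Fin m))
    (hD1 : 1 ≤ D.card) (hD : D.card ≤ m - 1)
    (hE1 : 1 ≤ E.card) (hE : E.card ≤ m - 1)
    (hF1 : 1 ≤ F.card) (hF : F.card ≤ m - 1) :
    ∀ p q r : Fin m → ZMod 2, 4 ∣ leeWt (cword D E F p q r) := by
  intro p q r
  exact stmt13' m hm D E F hD1 hE1 hF1 p q r
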